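/- Let G be a disperse ℓ-uniform hypergraph (ℓ ≥ 3) and let e₁,…,e_m be a tight walk in G. Then all (ℓ−1)-subsets of the union e₁ ∪ … ∪ e_m belong to the same tight component of G. -/

import Mathlib

/-!
In a disperse `ℓ`-uniform hypergraph an `(ℓ+1)`-set containing two edges contains at least `ℓ`
edges (it is almost complete), so all its `(ℓ-1)`-subsets lie in one tight component. Induct
along the walk `e₁, e₂, …`: the `(ℓ-1)`-sets not covered by induction are `A₀ ∪ {v}` with
`v ∈ e₁ \ e₂`, and `e₂ ∪ {v}` contains the two edges `e₁, e₂`. A tight walk from an edge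
`g ⊇ A₀` to `e₂` carries backwards the invariant "`v ∈ e`, or `f ∪ {v}` is almost complete for
an edge `f` tightly adjacent to `e`", and at `g` it puts `A₀ ∪ {v}` into an almost complete set
meeting `g` in `ℓ - 1` vertices. One step of the transport is a case analysis inside an
`(ℓ+2)`-set, which needs a fifth vertex, hence `ℓ ≥ 3`.
-/

open Finset

/-- An `ℓ`-uniform hypergraph (given by its edge set `E`) is disperse if every
`(ℓ+1)`-set of vertices induces `0`, `1`, `ℓ` or `ℓ+1` edges. -/
def Disperse {V : Type*} [DecidableEq V] (ℓ : ℕ) (E : Finset (Finset V)) : Prop :=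
  ∀ X : Finset V, X.card = ℓ + 1 →
    (E.filter (· ⊆ X)).card = 0 ∨ (E.filter (· ⊆ X)).card = 1 ∨
    (E.filter (· ⊆ X)).card = ℓ ∨ (E.filter (· ⊆ X)).card = ℓ + 1

/-- Edge set of the link of a vertex `v`: all `(ℓ-1)`-sets `e` with `e ∪ {v} ∈ E`. -/
def linkEdges {V : Type*} [DecidableEq V] (E : Finset (Finset V)) (v : V) :
    Finset (Finset V) :=
  (E.filter (fun e => v ∈ e)).image (fun e => e.erase v)

/-- `A` and `B` are connected by a tight walk in the `k`-uniform hypergraph with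
edge set `E`: there is a sequence of edges, consecutive ones sharing at least
`k - 1` vertices, whose first edge contains `A` and last edge contains `B`. -/
def TightConn {V : Type*} [DecidableEq V] (k : ℕ) (E : Finset (Finset V))
    (A B : Finset V) : Prop :=
  ∃ es : List (Finset V), ∃ h : es ≠ [],
    (∀ e ∈ es, e ∈ E) ∧ es.Chain' (fun a b => k - 1 ≤ (a ∩ b).card) ∧
    A ⊆ es.head h ∧ B ⊆ es.getLast h

section

variable {V : Type*} [DecidableEq V] {ℓ : ℕ} {E : Finset (Finset V)}

def AlmostComplete (ℓ : ℕ) (E : Finset (Finset V)) (X : Finset V) : Prop :=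
  X.card = ℓ + 1 ∧ ∀ x ∈ X, ∀ y ∈ X, x ≠ y → X.erase x ∈ E ∨ X.erase y ∈ E

def Attached (ℓ : ℕ) (E : Finset (Finset V)) (v : V) (e : Finset V) : Prop :=
  v ∈ e ∨ ∃ f ∈ E, AlmostComplete ℓ E (insert v f) ∧ ℓ - 1 ≤ (f ∩ e).card

section TightWalks

variable {k : ℕ}

theorem tightConn_of_subset {A B e : Finset V} (he : e ∈ E) (hA : A ⊆ e) (hB : B ⊆ e) :
    TightConn k E A B :=
  ⟨[e], List.cons_ne_nil _ _, by simpa using he, List.isChain_singleton e, hA, hB⟩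

theorem tightConn_of_adj {A B e e' : Finset V} (he : e ∈ E) (he' : e' ∈ E)
    (hadj : k - 1 ≤ (e ∩ e').card) (hA : A ⊆ e) (hB : B ⊆ e') : TightConn k E A B :=
  ⟨[e, e'], List.cons_ne_nil _ _, by simp [he, he'], List.isChain_pair.2 hadj, hA, hB⟩

theorem TightConn.symm {A B : Finset V} (h : TightConn k E A B) : TightConn k E B A := by
  obtain ⟨es, hne, hE, hch, hA, hB⟩ := h
  refine ⟨es.reverse, by simpa using hne, by simpa using hE, ?_, by simpa using hB,
    by simpa using hA⟩
  exact List.isChain_reverse.2 (hch.imp fun a b h => by rwa [inter_comm])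

theorem TightConn.trans {A B C : Finset V} (h₁ : TightConn k E A B) (h₂ : TightConn k E B C)
    (hB : k - 1 ≤ B.card) : TightConn k E A C := by
  obtain ⟨es₁, hne₁, hE₁, hch₁, hA, hB₁⟩ := h₁
  obtain ⟨es₂, hne₂, hE₂, hch₂, hB₂, hC⟩ := h₂
  refine ⟨es₁ ++ es₂, by simp [hne₁], fun e he => ?_, hch₁.append hch₂ ?_, ?_, ?_⟩
  · rcases List.mem_append.1 he with h | h
    exacts [hE₁ e h, hE₂ e h]
  · simp only [List.getLast?_eq_some_getLast hne₁, List.head?_eq_some_head hne₂,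
      Option.mem_def, Option.some.injEq]
    rintro _ rfl _ rfl
    exact hB.trans (card_le_card (subset_inter hB₁ hB₂))
  · rwa [List.head_append_of_ne_nil hne₁]
  · rwa [List.getLast_append_of_ne_nil _ hne₂]

end TightWalks

theorem sub_one_le_card_inter {X S S' : Finset V} (hX : X.card = ℓ + 1) (hS : S.card = ℓ)
    (hS' : S'.card = ℓ) (hSX : S ⊆ X) (hS'X : S' ⊆ X) : ℓ - 1 ≤ (S ∩ S').card := by
  have := card_le_card (union_subset hSX hS'X)
  have := card_union_add_card_inter S S'
  omega

theorem subset_insert_of_adj {e e' : Finset V} {v : V} (he : e.card = ℓ)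
    (hadj : ℓ - 1 ≤ (e ∩ e').card) (hve : v ∈ e) (hve' : v ∉ e') : e ⊆ insert v e' := by
  intro u hu
  by_contra h
  simp only [mem_insert, not_or] at h
  have := card_le_card (insert_subset (mem_sdiff.2 ⟨hu, h.2⟩)
    (singleton_subset_iff.2 (mem_sdiff.2 ⟨hve, hve'⟩)))
  rw [card_pair h.1] at this
  have := card_sdiff_add_card_inter e e'
  omega

theorem exists_erase_subset_of_adj {e e' : Finset V} (hℓ : 0 < ℓ) (he : e.card = ℓ)
    (hadj : ℓ - 1 ≤ (e ∩ e').card) : ∃ t ∈ e, e.erase t ⊆ e' := by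
  by_cases hee' : e ⊆ e'
  · obtain ⟨t, ht⟩ := card_pos.1 (he ▸ hℓ)
    exact ⟨t, ht, (erase_subset t e).trans hee'⟩
  obtain ⟨t, hte, hte'⟩ := not_subset.1 hee'
  exact ⟨t, hte, subset_insert_iff.1 (subset_insert_of_adj he hadj hte hte')⟩

theorem notMem_of_almostComplete_insert {f : Finset V} {v : V} (hf : f.card = ℓ)
    (h : AlmostComplete ℓ E (insert v f)) : v ∉ f := by
  intro hv
  have := h.1
  rw [insert_eq_of_mem hv, hf] at this
  omega

theorem AlmostComplete.erase_mem {X : Finset V} {x y : V} (hX : AlmostComplete ℓ E X)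
    (hx : x ∈ X) (hy : y ∈ X) (hxy : x ≠ y) (h : X.erase x ∉ E) : X.erase y ∈ E :=
  (hX.2 x hx y hy hxy).resolve_left h

theorem AlmostComplete.exists_edge_superset {X A : Finset V} (hℓ : 0 < ℓ)
    (hX : AlmostComplete ℓ E X) (hAX : A ⊆ X) (hA : A.card = ℓ - 1) :
    ∃ g ∈ E, A ⊆ g ∧ g ⊆ X := by
  obtain ⟨x, y, hxy, hXA⟩ := card_eq_two.1 (show (X \ A).card = 2 by
    rw [card_sdiff_of_subset hAX, hX.1, hA]; omega)
  have hx : x ∈ X \ A := by simp [hXA]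
  have hy : y ∈ X \ A := by simp [hXA]
  rw [mem_sdiff] at hx hy
  rcases hX.2 x hx.1 y hy.1 hxy with h | h
  · exact ⟨_, h, subset_erase.2 ⟨hAX, hx.2⟩, erase_subset _ _⟩
  · exact ⟨_, h, subset_erase.2 ⟨hAX, hy.2⟩, erase_subset _ _⟩

theorem AlmostComplete.tightConn {X A g : Finset V} (hℓ : 0 < ℓ)
    (hunif : ∀ e ∈ E, e.card = ℓ) (hX : AlmostComplete ℓ E X) (hAX : A ⊆ X)
    (hA : A.card = ℓ - 1) (hg : g ∈ E) (hgX : g ⊆ X) : TightConn ℓ E A g := by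
  obtain ⟨h, hh, hAh, hhX⟩ := hX.exists_edge_superset hℓ hAX hA
  exact tightConn_of_adj hh hg
    (sub_one_le_card_inter hX.1 (hunif h hh) (hunif g hg) hhX hgX) hAh subset_rfl

namespace Disperse

variable (hdisp : Disperse ℓ E) (hunif : ∀ e ∈ E, e.card = ℓ)
include hdisp hunif

theorem almostComplete_of_two_edges {X S S' : Finset V} (hX : X.card = ℓ + 1) (hS : S ∈ E)
    (hS' : S' ∈ E) (hSX : S ⊆ X) (hS'X : S' ⊆ X) (hSS' : S ≠ S') : AlmostComplete ℓ E X := by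
  refine ⟨hX, fun x hx y hy hxy => ?_⟩
  by_contra! h
  have hmem : ∀ z ∈ X, X.erase z ∈ X.powersetCard ℓ := fun z hz =>
    mem_powersetCard.2 ⟨erase_subset z X, by rw [card_erase_of_mem hz, hX]; rfl⟩
  have hlower : 2 ≤ (E.filter (· ⊆ X)).card := by
    rw [← card_pair hSS']
    exact card_le_card (by simp [insert_subset_iff, hS, hS', hSX, hS'X])
  have hupper : (E.filter (· ⊆ X)).card ≤ ℓ - 1 := by
    have hsub : E.filter (· ⊆ X) ⊆ ((X.powersetCard ℓ).erase (X.erase x)).erase (X.erase y) := by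
      intro e he
      rw [mem_filter] at he
      refine mem_erase.2 ⟨?_, mem_erase.2 ⟨?_, mem_powersetCard.2 ⟨he.2, hunif e he.1⟩⟩⟩
      · rintro rfl; exact h.2 he.1
      · rintro rfl; exact h.1 he.1
    have hyx : X.erase y ≠ X.erase x := by rwa [Ne, erase_inj _ hy, eq_comm]
    have := card_le_card hsub
    rwa [card_erase_of_mem (mem_erase.2 ⟨hyx, hmem y hy⟩), card_erase_of_mem (hmem x hx),
      card_powersetCard, hX, Nat.choose_succ_self_right] at this
  rcases hdisp X hX with h | h | h | h <;> omega

theorem erase_mem_and_almostComplete_erase (hℓ : 3 ≤ ℓ) {W : Finset V} (hW : W.card = ℓ + 2)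
    {a c v w : V} (ha : a ∈ W) (hc : c ∈ W) (hv : v ∈ W) (hw : w ∈ W) (hac : a ≠ c)
    (hav : a ≠ v) (hcv : c ≠ v) (hwa : w ≠ a) (hwv : w ≠ v)
    (hf : (W.erase v).erase c ∈ E) (hg : (W.erase v).erase a ∈ E)
    (hfv : AlmostComplete ℓ E (W.erase c)) (hgv : ¬ AlmostComplete ℓ E (W.erase a)) :
    (W.erase v).erase w ∈ E ∧ AlmostComplete ℓ E (W.erase w) := by
  have of_two : ∀ {p q r}, p ∈ W → q ∈ W → r ∈ W → q ≠ p → r ≠ p → q ≠ r →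
      (W.erase p).erase q ∈ E → (W.erase p).erase r ∈ E → AlmostComplete ℓ E (W.erase p) :=
    fun hp hq _ hqp _ hqr h₁ h₂ => hdisp.almostComplete_of_two_edges hunif
      (by rw [card_erase_of_mem hp, hW]; rfl) h₁ h₂ (erase_subset _ _) (erase_subset _ _)
      (by rwa [Ne, erase_inj _ (mem_erase.2 ⟨hqp, hq⟩)])
  have swap : ∀ {p q}, (W.erase p).erase q ∈ E ↔ (W.erase q).erase p ∈ E := by
    intro p q; rw [erase_right_comm]
  have hW' : ∀ {p q}, p ∈ W → p ≠ q → p ∈ W.erase q := fun hp hpq => mem_erase.2 ⟨hpq, hp⟩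
  have hnot : ∀ {q}, q ∈ W → q ≠ a → q ≠ v → (W.erase a).erase q ∉ E :=
    fun hq hqa hqv h => hgv (of_two ha hv hq hav.symm hqa hqv.symm (swap.1 hg) h)
  have hedge : ∀ {q}, q ∈ W → q ≠ c → q ≠ a → (W.erase c).erase q ∈ E :=
    fun hq hqc hqa => hfv.erase_mem (hW' ha hac) (hW' hq hqc) hqa.symm
      (mt swap.1 (hnot hc hac.symm hcv))
  have hfull : ∀ {u}, u ∈ W → u ≠ c → u ≠ a → u ≠ v → (W.erase v).erase u ∈ E →
      AlmostComplete ℓ E (W.erase u) := fun hu huc hua huv h =>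
    of_two hu hv hc huv.symm huc.symm hcv.symm (swap.1 h) (swap.1 (hedge hu huc hua))
  by_cases hwc : w = c
  · subst hwc
    exact ⟨hf, hfv⟩
  suffices hβ : (W.erase v).erase w ∈ E from ⟨hβ, hfull hw hwc hwa hwv hβ⟩
  -- A fifth vertex `x` makes first `W - x`, then `W - w` almost complete; but `W - w` misses
  -- both `W - w - v` and `W - w - a`.
  by_contra hβ
  obtain ⟨x, hx, hx'⟩ : ∃ x ∈ W, x ∉ ({a, c, v, w} : Finset V) :=
    exists_mem_notMem_of_card_lt_card (card_le_four.trans_lt (by omega))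
  simp only [mem_insert, mem_singleton, not_or] at hx'
  obtain ⟨hxa, hxc, hxv, hxw⟩ := hx'
  have hWv : AlmostComplete ℓ E (W.erase v) := of_two hv hc ha hcv hav hac.symm hf hg
  have hxW := hfull hx hxc hxa hxv (hWv.erase_mem (hW' hw hwv) (hW' hx hxv) (Ne.symm hxw) hβ)
  have hwx : (W.erase x).erase w ∈ E := hxW.erase_mem (hW' ha (Ne.symm hxa)) (hW' hw (Ne.symm hxw))
    (Ne.symm hwa) (mt swap.1 (hnot hx hxa hxv))
  have hwW := of_two hw hx hc hxw (Ne.symm hwc) hxc (swap.1 hwx)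
    (swap.1 (hedge hw hwc hwa))
  exact hnot hw hwa hwv (swap.1 (hwW.erase_mem (hW' hv (Ne.symm hwv)) (hW' ha (Ne.symm hwa))
    (Ne.symm hav) (mt swap.1 hβ)))

theorem erase_union_mem_and_almostComplete (hℓ : 3 ≤ ℓ) {f e : Finset V} {v t : V}
    (hf : f ∈ E) (he : e ∈ E) (hadj : ℓ - 1 ≤ (f ∩ e).card) (hve : v ∉ e)
    (hfv : AlmostComplete ℓ E (insert v f)) (hev : ¬ AlmostComplete ℓ E (insert v e))
    (ht : t ∈ e) :
    (f ∪ e).erase t ∈ E ∧ AlmostComplete ℓ E (insert v ((f ∪ e).erase t)) := by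
  have hfe : f ≠ e := by rintro rfl; exact hev hfv
  have hvf := notMem_of_almostComplete_insert (hunif f hf) hfv
  obtain ⟨c, hce, hcf⟩ : ∃ c ∈ e, c ∉ f := not_subset.1 fun h =>
    hfe (eq_of_subset_of_card_le h (by rw [hunif f hf, hunif e he])).symm
  obtain ⟨a, haf, hae⟩ : ∃ a ∈ f, a ∉ e := not_subset.1 fun h =>
    hfe (eq_of_subset_of_card_le h (by rw [hunif f hf, hunif e he]))
  have hYc : f ∪ e = insert c f := subset_antisymm
    (union_subset (subset_insert c f)
      (subset_insert_of_adj (hunif e he) (by rwa [inter_comm]) hce hcf))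
    (insert_subset (mem_union_right f hce) subset_union_left)
  have hYa : f ∪ e = insert a e := subset_antisymm
    (union_subset (subset_insert_of_adj (hunif f hf) hadj haf hae) (subset_insert a e))
    (insert_subset (mem_union_left e haf) subset_union_right)
  have hvY : v ∉ f ∪ e := by simp [hvf, hve]
  have hWv : (insert v (f ∪ e)).erase v = f ∪ e := erase_insert hvY
  have hW : ∀ {x}, x ≠ v → (insert v (f ∪ e)).erase x = insert v ((f ∪ e).erase x) :=
    fun hx => erase_insert_of_ne (Ne.symm hx)
  have hcv : c ≠ v := fun h => hve (h ▸ hce)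
  have hav : a ≠ v := fun h => hvf (h ▸ haf)
  have htv : t ≠ v := fun h => hve (h ▸ ht)
  have hf' : (f ∪ e).erase c = f := by rw [hYc, erase_insert hcf]
  have he' : (f ∪ e).erase a = e := by rw [hYa, erase_insert hae]
  have key := hdisp.erase_mem_and_almostComplete_erase hunif hℓ (W := insert v (f ∪ e))
    (by rw [card_insert_of_notMem hvY, hYc, card_insert_of_notMem hcf, hunif f hf])
    (by simp [haf]) (by simp [hce]) (mem_insert_self v _) (by simp [ht])
    (by rintro rfl; exact hae hce) hav hcv (by rintro rfl; exact hae ht) htv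
    (by rwa [hWv, hf']) (by rwa [hWv, he']) (by rwa [hW hcv, hf'])
    (by rwa [hW hav, he'])
  rwa [hWv, hW htv] at key

theorem attached_of_adj (hℓ : 3 ≤ ℓ) {x y : Finset V} {v : V} (hx : x ∈ E) (hy : y ∈ E)
    (hadj : ℓ - 1 ≤ (x ∩ y).card) (h : Attached ℓ E v y) : Attached ℓ E v x := by
  by_cases hvx : v ∈ x
  · exact Or.inl hvx
  by_cases hvy : v ∈ y
  · have hxy : x ≠ y := by rintro rfl; exact hvx hvy
    refine Or.inr ⟨x, hx, hdisp.almostComplete_of_two_edges hunif ?_ hy hx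
      (subset_insert_of_adj (hunif y hy) (by rwa [inter_comm]) hvy hvx) (subset_insert v x)
      hxy.symm, by rw [inter_self, hunif x hx]; omega⟩
    rw [card_insert_of_notMem hvx, hunif x hx]
  obtain ⟨f, hf, hfv, hfy⟩ := h.resolve_left hvy
  by_cases hyv : AlmostComplete ℓ E (insert v y)
  · exact Or.inr ⟨y, hy, hyv, by rwa [inter_comm]⟩
  obtain ⟨t, ht, hty⟩ := exists_erase_subset_of_adj (by omega) (hunif y hy)
    (by rwa [inter_comm] : ℓ - 1 ≤ (y ∩ x).card)
  obtain ⟨hβ, hβv⟩ := hdisp.erase_union_mem_and_almostComplete hunif hℓ hf hy hfy hvy hfv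
    hyv ht
  refine Or.inr ⟨_, hβ, hβv, ?_⟩
  calc ℓ - 1 = (y.erase t).card := by rw [card_erase_of_mem ht, hunif y hy]
    _ ≤ _ := card_le_card (subset_inter (erase_subset_erase t subset_union_right) hty)

theorem attached_head (hℓ : 3 ≤ ℓ) {ws : List (Finset V)} {v : V} (hne : ws ≠ [])
    (hE : ∀ e ∈ ws, e ∈ E) (hch : ws.IsChain (fun a b => ℓ - 1 ≤ (a ∩ b).card))
    (h : Attached ℓ E v (ws.getLast hne)) : Attached ℓ E v (ws.head hne) :=
  (hch.imp_of_mem_imp (S := fun a b => a ∈ E ∧ b ∈ E ∧ ℓ - 1 ≤ (a ∩ b).card)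
      fun a b ha hb hab => ⟨hE a ha, hE b hb, hab⟩).backwards_induction (Attached ℓ E v) ws
    (fun _ _ ⟨hx, hy, hxy⟩ => hdisp.attached_of_adj hunif hℓ hx hy hxy) (fun _ => h) _
    (List.head_mem hne)

theorem tightConn_insert_of_attached (hℓ : 3 ≤ ℓ) {g A₀ : Finset V} {v : V} (hg : g ∈ E)
    (hatt : Attached ℓ E v g) (hA₀g : A₀ ⊆ g) (hA₀ : A₀.card = ℓ - 2) :
    TightConn ℓ E (insert v A₀) g := by
  by_cases hvg : v ∈ g
  · exact tightConn_of_subset hg (insert_subset hvg hA₀g) subset_rfl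
  have hA : (insert v A₀).card = ℓ - 1 := by
    rw [card_insert_of_notMem fun h => hvg (hA₀g h), hA₀]; omega
  by_cases hgv : AlmostComplete ℓ E (insert v g)
  · exact hgv.tightConn (by omega) hunif (insert_subset_insert v hA₀g) hA hg (subset_insert v g)
  obtain ⟨f, hf, hfv, hfg⟩ := hatt.resolve_left hvg
  obtain ⟨w, hwg, hwA₀⟩ : ∃ w ∈ g, w ∉ A₀ := not_subset.1 fun h => by
    have := card_le_card h; rw [hunif g hg] at this; omega
  obtain ⟨hβ, hβv⟩ := hdisp.erase_union_mem_and_almostComplete hunif hℓ hf hg hfg hvg hfv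
    hgv hwg
  have hA₀β : A₀ ⊆ (f ∪ g).erase w := subset_erase.2 ⟨hA₀g.trans subset_union_right, hwA₀⟩
  have hβg : ℓ - 1 ≤ ((f ∪ g).erase w ∩ g).card :=
    calc ℓ - 1 = (g.erase w).card := by rw [card_erase_of_mem hwg, hunif g hg]
      _ ≤ _ := card_le_card (subset_inter (erase_subset_erase w subset_union_right)
        (erase_subset w g))
  exact (hβv.tightConn (by omega) hunif (insert_subset_insert v hA₀β) hA hβ
    (subset_insert _ _)).trans (tightConn_of_adj hβ hg hβg subset_rfl subset_rfl)
    (by rw [hunif _ hβ]; omega)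

theorem tightConn_insert (hℓ : 3 ≤ ℓ) {e B A₀ : Finset V} {v : V} (he : e ∈ E)
    (hev : AlmostComplete ℓ E (insert v e)) (hB : TightConn ℓ E B e) (hA₀B : A₀ ⊆ B)
    (hA₀ : A₀.card = ℓ - 2) : TightConn ℓ E (insert v A₀) e := by
  obtain ⟨ws, hne, hE, hch, hBg, he_last⟩ := hB
  have hg := hE _ (List.head_mem hne)
  have hatt : Attached ℓ E v (ws.getLast hne) :=
    Or.inr ⟨e, he, hev, by rw [inter_eq_left.2 he_last, hunif e he]; omega⟩
  exact (hdisp.tightConn_insert_of_attached hunif hℓ hg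
    (hdisp.attached_head hunif hℓ hne hE hch hatt) (hA₀B.trans hBg) hA₀).trans
    ⟨ws, hne, hE, hch, subset_rfl, he_last⟩ (by rw [hunif _ hg]; omega)

theorem tightConn_head (hℓ : 3 ≤ ℓ) : ∀ (es : List (Finset V)) (hne : es ≠ []),
    (∀ e ∈ es, e ∈ E) → es.IsChain (fun a b => ℓ - 1 ≤ (a ∩ b).card) →
    ∀ A ⊆ es.foldr (· ∪ ·) ∅, A.card = ℓ - 1 → TightConn ℓ E A (es.head hne)
  | [e], _, hE, _, A, hA, _ =>
    tightConn_of_subset (hE e (List.mem_singleton_self e)) (by simpa using hA) subset_rfl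
  | e₁ :: e₂ :: es, _, hE, hch, A, hA, hAc => by
    have he₁ := hE e₁ (by simp)
    have he₂ := hE e₂ (by simp)
    obtain ⟨h12, hch'⟩ := List.isChain_cons_cons.1 hch
    have ih := tightConn_head hℓ (e₂ :: es) (List.cons_ne_nil _ _)
      (fun e he => hE e (List.mem_cons_of_mem _ he)) hch'
    set U := (e₂ :: es).foldr (· ∪ ·) ∅
    have he₂U : e₂ ⊆ U := subset_union_left
    suffices h : TightConn ℓ E A e₂ from h.trans
      (tightConn_of_adj he₂ he₁ (by rwa [inter_comm]) subset_rfl subset_rfl)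
      (by rw [hunif e₂ he₂]; omega)
    by_cases hAU : A ⊆ U
    · exact ih A hAU hAc
    obtain ⟨v, hvA, hvU⟩ := not_subset.1 hAU
    have hA : A ⊆ e₁ ∪ U := hA
    have hve₂ : v ∉ e₂ := fun h => hvU (he₂U h)
    have hve₁ : v ∈ e₁ := (mem_union.1 (hA hvA)).resolve_right hvU
    have he₁v : e₁ ⊆ insert v e₂ := subset_insert_of_adj (hunif e₁ he₁) h12 hve₁ hve₂
    have hfull : AlmostComplete ℓ E (insert v e₂) :=
      hdisp.almostComplete_of_two_edges hunif
        (by rw [card_insert_of_notMem hve₂, hunif e₂ he₂]) he₁ he₂ he₁v (subset_insert v e₂)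
        (by rintro rfl; exact hve₂ hve₁)
    have hA₀ : (A.erase v).card = ℓ - 2 := by rw [card_erase_of_mem hvA, hAc]; omega
    have hA₀U : A.erase v ⊆ U := fun u hu => by
      obtain ⟨huv, huA⟩ := mem_erase.1 hu
      rcases mem_union.1 (hA huA) with h | h
      · exact he₂U ((mem_insert.1 (he₁v h)).resolve_left huv)
      · exact h
    obtain ⟨y, hye₂, hyA₀⟩ : ∃ y ∈ e₂, y ∉ A.erase v := not_subset.1 fun h => by
      have := card_le_card h; rw [hunif e₂ he₂] at this; omega
    have hB := ih _ (insert_subset (he₂U hye₂) hA₀U)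
      (by rw [card_insert_of_notMem hyA₀, hA₀]; omega)
    simpa [insert_erase hvA] using
      hdisp.tightConn_insert hunif hℓ he₂ hfull hB (subset_insert y _) hA₀

end Disperse

end

theorem tight_walk_union_one_component {V : Type*} [DecidableEq V] (ℓ : ℕ) (hℓ : 3 ≤ ℓ)
    (E : Finset (Finset V)) (hunif : ∀ e ∈ E, e.card = ℓ) (hdisp : Disperse ℓ E)
    (es : List (Finset V)) (hne : es ≠ []) (hmem : ∀ e ∈ es, e ∈ E)
    (hchain : es.Chain' (fun a b => ℓ - 1 ≤ (a ∩ b).card)) :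
    ∀ A B : Finset V, A ⊆ es.foldr (· ∪ ·) ∅ → B ⊆ es.foldr (· ∪ ·) ∅ →
      A.card = ℓ - 1 → B.card = ℓ - 1 → TightConn ℓ E A B := by
  intro A B hA hB hAc hBc
  have hconn := hdisp.tightConn_head hunif hℓ es hne hmem hchain
  exact (hconn A hA hAc).trans (hconn B hB hBc).symm
    (by rw [hunif _ (hmem _ (List.head_mem hne))]; omega)
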